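/- Let K > 0, δ > 1, and let a < b be real numbers with b − a < 2π. Let h : ℝ → ℝ be continuously differentiable on [a,b] with h(a) = h(b) = 0, h'(a) > 0, h'(b) < 0 and h(x) > 0 for all x ∈ (a,b). Let M be the global maximum value of h on [a,b], attained at x_M ∈ (a,b). Define G(x) = (x + (K/δ)·log h(x), h(x)^(1/δ)) for x ∈ (a,b). Then: (i) the first coordinate of G(x) tends to −∞ as x → a⁺ and as x → b⁻; (ii) the second coordinate of G(x) tends to 0 as x → a⁺ and as x → b⁻; (iii) h(x)^(1/δ) ≤ M^(1/δ) for all x ∈ (a,b), with equality at x = x_M; and (iv) there exists a fold point x_* ∈ (x_M, b) with h(x_*) = −(K/δ)·h'(x_*), at which the derivative of the first coordinate of G vanishes. -/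

import Mathlib

/-!
Near an endpoint `c` with `h c = 0` the function `h` tends to `0⁺`, so `log h → -∞` and
`h ^ (1/δ) → 0`. For the fold point, `h + (K/δ) h'` is continuous on `[x_M, b]`, equals
`M > 0` at the maximum `x_M` (where `h' = 0`) and `(K/δ) h'(b) < 0` at `b`; a zero of it is a
zero of `(x + (K/δ) log h)' = 1 + (K/δ) h'/h`.
-/

open Set Filter Topology Real

lemma tendsto_nhdsGT_zero_of_continuousWithinAt {s : Set ℝ} {c : ℝ} {f : ℝ → ℝ}
    (hf : ContinuousWithinAt f s c) (hc : f c = 0) (hpos : ∀ x ∈ s, 0 < f x) :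
    Tendsto f (𝓝[s] c) (𝓝[>] 0) :=
  tendsto_nhdsWithin_of_tendsto_nhds_of_eventually_within _ (hc ▸ hf)
    (eventually_nhdsWithin_of_forall hpos)

lemma tendsto_add_mul_log_atBot {l : Filter ℝ} {c κ : ℝ} {f : ℝ → ℝ} (hl : l ≤ 𝓝 c)
    (hκ : 0 < κ) (hf : Tendsto f l (𝓝[>] 0)) :
    Tendsto (fun x => x + κ * log (f x)) l atBot :=
  (tendsto_id.mono_left hl).add_atBot ((tendsto_log_nhdsGT_zero.comp hf).const_mul_atBot hκ)

lemma tendsto_rpow_zero_of_tendsto_nhdsGT_zero {l : Filter ℝ} {p : ℝ} {f : ℝ → ℝ}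
    (hp : 0 < p) (hf : Tendsto f l (𝓝[>] 0)) : Tendsto (fun x => f x ^ p) l (𝓝 0) := by
  simpa [zero_rpow hp.ne'] using (hf.mono_right nhdsWithin_le_nhds).rpow_const (Or.inr hp.le)

lemma exists_mem_Ioo_eq_neg_mul_deriv {h h' : ℝ → ℝ} {c b κ : ℝ} (hcb : c ≤ b)
    (hκ : 0 < κ) (hh : ContinuousOn h (Icc c b)) (hh' : ContinuousOn h' (Icc c b))
    (hc : 0 < h c) (hc' : h' c = 0) (hb : h b = 0) (hb' : h' b < 0) :
    ∃ x ∈ Ioo c b, h x = -κ * h' x := by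
  have hF : ContinuousOn (fun x => h x + κ * h' x) (Icc c b) :=
    hh.add (continuousOn_const.mul hh')
  have hsign : (0 : ℝ) ∈ Ioo (h b + κ * h' b) (h c + κ * h' c) :=
    ⟨by rw [hb, zero_add]; exact mul_neg_of_pos_of_neg hκ hb',
      by rwa [hc', mul_zero, add_zero]⟩
  obtain ⟨x, hx, hFx⟩ := intermediate_value_Ioo' hcb hF hsign
  exact ⟨x, hx, by linarith⟩

lemma hasDerivAt_add_mul_log_eq_zero {h : ℝ → ℝ} {x d κ : ℝ} (hd : HasDerivAt h d x)
    (hx : 0 < h x) (hfold : h x = -κ * d) :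
    HasDerivAt (fun y => y + κ * log (h y)) 0 x := by
  refine ((hasDerivAt_id' x).add ((hd.log hx.ne').const_mul κ)).congr_deriv ?_
  rw [← mul_div_assoc, show κ * d = -h x by linarith, neg_div, div_self hx.ne']
  ring

theorem stmt_4_general (K δ a b : ℝ) (hK : 0 < K) (hδ : 1 < δ)
    (h h' : ℝ → ℝ)
    (hderiv : ∀ x ∈ Set.Icc a b, HasDerivAt h (h' x) x)
    (hcont : ContinuousOn h' (Set.Icc a b))
    (ha0 : h a = 0) (hb0 : h b = 0)
    (hb' : h' b < 0)
    (hpos : ∀ x ∈ Set.Ioo a b, 0 < h x)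
    (M xM : ℝ) (hxM : xM ∈ Set.Ioo a b) (hMval : h xM = M)
    (hMmax : ∀ x ∈ Set.Icc a b, h x ≤ M) :
    (Filter.Tendsto (fun x => x + (K / δ) * Real.log (h x))
        (nhdsWithin a (Set.Ioo a b)) Filter.atBot ∧
      Filter.Tendsto (fun x => x + (K / δ) * Real.log (h x))
        (nhdsWithin b (Set.Ioo a b)) Filter.atBot) ∧
    (Filter.Tendsto (fun x => h x ^ (1 / δ)) (nhdsWithin a (Set.Ioo a b)) (nhds 0) ∧
      Filter.Tendsto (fun x => h x ^ (1 / δ)) (nhdsWithin b (Set.Ioo a b)) (nhds 0)) ∧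
    ((∀ x ∈ Set.Ioo a b, h x ^ (1 / δ) ≤ M ^ (1 / δ)) ∧ h xM ^ (1 / δ) = M ^ (1 / δ)) ∧
    (∃ xs ∈ Set.Ioo xM b, h xs = -(K / δ) * h' xs ∧
      HasDerivAt (fun x => x + (K / δ) * Real.log (h x)) 0 xs) := by
  have hab : a ≤ b := hxM.1.le.trans hxM.2.le
  have hδ0 : 0 < δ := one_pos.trans hδ
  have hκ : 0 < K / δ := div_pos hK hδ0
  have hp : 0 < 1 / δ := one_div_pos.2 hδ0
  have hta := tendsto_nhdsGT_zero_of_continuousWithinAt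
    (hderiv a (left_mem_Icc.2 hab)).continuousAt.continuousWithinAt ha0 hpos
  have htb := tendsto_nhdsGT_zero_of_continuousWithinAt
    (hderiv b (right_mem_Icc.2 hab)).continuousAt.continuousWithinAt hb0 hpos
  have hmax : IsLocalMax h xM :=
    mem_of_superset (Icc_mem_nhds hxM.1 hxM.2) fun x hx =>
      (hMmax x hx).trans_eq hMval.symm
  have hsub : Icc xM b ⊆ Icc a b := Icc_subset_Icc_left hxM.1.le
  obtain ⟨xs, hxs, hfold⟩ := exists_mem_Ioo_eq_neg_mul_deriv hxM.2.le hκ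
    (fun x hx => (hderiv x (hsub hx)).continuousAt.continuousWithinAt) (hcont.mono hsub)
    (hpos xM hxM) (hmax.hasDerivAt_eq_zero (hderiv xM (Ioo_subset_Icc_self hxM))) hb0 hb'
  have hxsab : xs ∈ Ioo a b := ⟨hxM.1.trans hxs.1, hxs.2⟩
  exact ⟨⟨tendsto_add_mul_log_atBot nhdsWithin_le_nhds hκ hta,
      tendsto_add_mul_log_atBot nhdsWithin_le_nhds hκ htb⟩,
    ⟨tendsto_rpow_zero_of_tendsto_nhdsGT_zero hp hta,
      tendsto_rpow_zero_of_tendsto_nhdsGT_zero hp htb⟩,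
    ⟨fun x hx => rpow_le_rpow (hpos x hx).le (hMmax x (Ioo_subset_Icc_self hx)) hp.le,
      by rw [hMval]⟩,
    xs, hxs, hfold,
    hasDerivAt_add_mul_log_eq_zero (hderiv xs (Ioo_subset_Icc_self hxsab)) (hpos xs hxsab)
      hfold⟩

/-- Geometry of the inverse transition map `η⁻¹`: the image
`G(x) = (x + (K/δ)·log h(x), h(x)^(1/δ))` of the graph of `h` is a helix in `In(v)`:
its angular coordinate tends to `-∞` and its height tends to `0` at both endpoints,
its maximum height is `M^(1/δ)`, and it has a fold point `x_* ∈ (x_M, b)` where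
`h(x_*) = -(K/δ)·h'(x_*)` and the derivative of the angular coordinate vanishes. -/
theorem stmt_4 (K δ a b : ℝ) (hK : 0 < K) (hδ : 1 < δ) (hab : a < b)
    (hperiod : b - a < 2 * Real.pi)
    (h h' : ℝ → ℝ)
    (hderiv : ∀ x ∈ Set.Icc a b, HasDerivAt h (h' x) x)
    (hcont : ContinuousOn h' (Set.Icc a b))
    (ha0 : h a = 0) (hb0 : h b = 0)
    (ha' : 0 < h' a) (hb' : h' b < 0)
    (hpos : ∀ x ∈ Set.Ioo a b, 0 < h x)
    (M xM : ℝ) (hxM : xM ∈ Set.Ioo a b) (hMval : h xM = M)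
    (hMmax : ∀ x ∈ Set.Icc a b, h x ≤ M) :
    (Filter.Tendsto (fun x => x + (K / δ) * Real.log (h x))
        (nhdsWithin a (Set.Ioo a b)) Filter.atBot ∧
      Filter.Tendsto (fun x => x + (K / δ) * Real.log (h x))
        (nhdsWithin b (Set.Ioo a b)) Filter.atBot) ∧
    (Filter.Tendsto (fun x => h x ^ (1 / δ)) (nhdsWithin a (Set.Ioo a b)) (nhds 0) ∧
      Filter.Tendsto (fun x => h x ^ (1 / δ)) (nhdsWithin b (Set.Ioo a b)) (nhds 0)) ∧
    ((∀ x ∈ Set.Ioo a b, h x ^ (1 / δ) ≤ M ^ (1 / δ)) ∧ h xM ^ (1 / δ) = M ^ (1 / δ)) ∧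
    (∃ xs ∈ Set.Ioo xM b, h xs = -(K / δ) * h' xs ∧
      HasDerivAt (fun x => x + (K / δ) * Real.log (h x)) 0 xs) :=
  stmt_4_general K δ a b hK hδ h h' hderiv hcont ha0 hb0 hb' hpos M xM hxM hMval hMmax
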